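/- arXiv:2601.06433 — 2 statements merged into one kernel-verified Lean document; each statement's English description precedes it below -/
import Mathlib

section
/- For K ≥ 2, the Bernstein polynomial U(q) = Σ_{m=0}^K C(K,m) q^m (1−q)^{K−m} log C(K,m) is strictly concave on (0,1), and by the symmetry U(q) = U(1−q) its unique maximizer on [0,1] is q* = 1/2. -/
open Real Finset

namespace BernLogChoose
open Polynomial

lemma deriv_bern_sum (n : ℕ) (g : ℕ → ℝ) :
    Polynomial.derivative (∑ m ∈ Finset.range (n + 2), C (g m) * bernsteinPolynomial ℝ (n + 1) m)
      = ((n : ℝ[X]) + 1) * ∑ m ∈ Finset.range (n + 1),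
          C (g (m + 1) - g m) * bernsteinPolynomial ℝ n m := by
  have key : ∑ m ∈ Finset.range (n + 1), C (g (m + 1)) * bernsteinPolynomial ℝ n (m + 1)
      = ∑ m ∈ Finset.range (n + 1), C (g m) * bernsteinPolynomial ℝ n m
        - C (g 0) * bernsteinPolynomial ℝ n 0 := by
    have h0 := Finset.sum_range_succ' (fun m => C (g m) * bernsteinPolynomial ℝ n m) (n + 1)
    have h1 := Finset.sum_range_succ (fun m => C (g m) * bernsteinPolynomial ℝ n m) (n + 1)
    rw [bernsteinPolynomial.eq_zero_of_lt ℝ (by omega), mul_zero, add_zero] at h1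
    rw [h1] at h0
    linear_combination -h0
  rw [map_sum, Finset.sum_range_succ']
  simp only [derivative_mul, derivative_C, zero_mul, zero_add,
    bernsteinPolynomial.derivative_succ, bernsteinPolynomial.derivative_zero,
    Nat.add_sub_cancel, Nat.cast_add, Nat.cast_one, C_sub]
  have e1 : ∑ x ∈ Finset.range (n+1), C (g (x+1)) * (((n : ℝ[X])+1) * bernsteinPolynomial ℝ n x)
      = ((n : ℝ[X])+1) * ∑ x ∈ Finset.range (n+1), C (g (x+1)) * bernsteinPolynomial ℝ n x := by
    rw [Finset.mul_sum]; exact Finset.sum_congr rfl fun x _ => by ring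
  have e2 : ∑ x ∈ Finset.range (n+1), C (g (x+1)) * (((n : ℝ[X])+1) * bernsteinPolynomial ℝ n (x+1))
      = ((n : ℝ[X])+1) * ∑ x ∈ Finset.range (n+1), C (g (x+1)) * bernsteinPolynomial ℝ n (x+1) := by
    rw [Finset.mul_sum]; exact Finset.sum_congr rfl fun x _ => by ring
  simp only [mul_sub, sub_mul, Finset.sum_sub_distrib]
  rw [e1, e2, key]
  ring

lemma choose_sq_gt {K m : ℕ} (h : m + 2 ≤ K) :
    K.choose m * K.choose (m + 2) < K.choose (m + 1) * K.choose (m + 1) := by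
  obtain ⟨j, rfl⟩ : ∃ j, K = m + 2 + j := ⟨K - (m + 2), by omega⟩
  have h1 : (m+2+j).choose (m+1) * (m+1) = (m+2+j).choose m * (j+2) := by
    have := Nat.choose_succ_right_eq (m+2+j) m
    rwa [show m+2+j - m = j+2 by omega] at this
  have h2 : (m+2+j).choose (m+2) * (m+2) = (m+2+j).choose (m+1) * (j+1) := by
    have := Nat.choose_succ_right_eq (m+2+j) (m+1)
    rwa [show m+2+j - (m+1) = j+1 by omega] at this
  have ha : 0 < (m+2+j).choose m := Nat.choose_pos (by omega)
  have hb : 0 < (m+2+j).choose (m+1) := Nat.choose_pos (by omega)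
  have key : (m+2+j).choose m * (m+2+j).choose (m+2) * ((m+1)*(m+2))
      < (m+2+j).choose (m+1) * (m+2+j).choose (m+1) * ((m+1)*(m+2)) := by
    calc (m+2+j).choose m * (m+2+j).choose (m+2) * ((m+1)*(m+2))
        = ((m+2+j).choose m * (m+1)) * ((m+2+j).choose (m+2) * (m+2)) := by ring
      _ = ((m+2+j).choose m * (m+2+j).choose (m+1)) * ((m+1)*(j+1)) := by rw [h2]; ring
      _ < ((m+2+j).choose m * (m+2+j).choose (m+1)) * ((j+2)*(m+2)) := by
          have h3 : (m+1)*(j+1) < (j+2)*(m+2) := by nlinarith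
          exact Nat.mul_lt_mul_of_le_of_lt (le_refl _) h3 (Nat.mul_pos ha hb)
      _ = ((m+2+j).choose (m+1) * (m+1)) * ((m+2+j).choose (m+1) * (m+2)) := by rw [h1]; ring
      _ = (m+2+j).choose (m+1) * (m+2+j).choose (m+1) * ((m+1)*(m+2)) := by ring
  exact Nat.lt_of_mul_lt_mul_right key

lemma log_choose_concave {K m : ℕ} (h : m + 2 ≤ K) :
    Real.log (K.choose (m + 2)) - 2 * Real.log (K.choose (m + 1)) + Real.log (K.choose m) < 0 := by
  have ha : 0 < K.choose m := Nat.choose_pos (by omega)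
  have hb : 0 < K.choose (m+1) := Nat.choose_pos (by omega)
  have hc : 0 < K.choose (m+2) := Nat.choose_pos (by omega)
  have ham : (0:ℝ) < K.choose m := by exact_mod_cast ha
  have hbm : (0:ℝ) < K.choose (m+1) := by exact_mod_cast hb
  have hcm : (0:ℝ) < K.choose (m+2) := by exact_mod_cast hc
  have h1 : Real.log ((K.choose m : ℝ) * (K.choose (m+2)))
      < Real.log ((K.choose (m+1) : ℝ) * (K.choose (m+1))) := by
    apply Real.log_lt_log (by positivity)
    exact_mod_cast choose_sq_gt h
  rw [Real.log_mul (ne_of_gt ham) (ne_of_gt hcm),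
      Real.log_mul (ne_of_gt hbm) (ne_of_gt hbm)] at h1
  linarith

lemma bern_eval (n m : ℕ) (q : ℝ) :
    (bernsteinPolynomial ℝ n m).eval q = (n.choose m : ℝ) * q ^ m * (1 - q) ^ (n - m) := by
  simp [bernsteinPolynomial]

noncomputable def Uaux (k : ℕ) : ℝ → ℝ := fun q : ℝ =>
  ∑ m ∈ Finset.range (k + 2 + 1),
    ((k + 2).choose m : ℝ) * q ^ m * (1 - q) ^ (k + 2 - m) * Real.log ((k + 2).choose m)

lemma Uaux_eq_eval (k : ℕ) :
    Uaux k = fun q => Polynomial.eval q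
      (∑ m ∈ Finset.range (k + 1 + 2),
        C (Real.log (((k+2).choose m : ℝ))) * bernsteinPolynomial ℝ (k + 1 + 1) m) := by
  funext q
  rw [Polynomial.eval_finset_sum, Uaux]
  apply Finset.sum_congr (by norm_num)
  intro m _
  rw [Polynomial.eval_mul, eval_C, bern_eval]
  show ((k+2).choose m : ℝ) * q ^ m * (1 - q) ^ (k + 2 - m) * Real.log ((k+2).choose m)
      = Real.log ((k+2).choose m : ℝ) * (((k+1+1).choose m : ℝ) * q ^ m * (1 - q) ^ (k+1+1 - m))
  ring_nf

lemma Uaux_strictConcave (k : ℕ) :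
    StrictConcaveOn ℝ (Set.Ioo (0:ℝ) 1) (Uaux k) := by
  set f : ℕ → ℝ := fun m => Real.log (((k+2).choose m : ℝ)) with hf
  set P : ℝ[X] := ∑ m ∈ Finset.range (k + 1 + 2), C (f m) * bernsteinPolynomial ℝ (k + 1 + 1) m
    with hP
  have hfun : Uaux k = fun q => P.eval q := Uaux_eq_eval k
  have hd1 : Polynomial.derivative P = (((k+1 : ℕ) : ℝ[X]) + 1) *
      ∑ m ∈ Finset.range (k + 1 + 1), C (f (m + 1) - f m) * bernsteinPolynomial ℝ (k + 1) m :=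
    deriv_bern_sum (k+1) f
  have hd2 : Polynomial.derivative (Polynomial.derivative P)
      = (((k+1 : ℕ) : ℝ[X]) + 1) * ((((k : ℕ) : ℝ[X]) + 1) *
        ∑ m ∈ Finset.range (k + 1),
          C ((f (m + 2) - f (m + 1)) - (f (m + 1) - f m)) * bernsteinPolynomial ℝ k m) := by
    rw [hd1, derivative_mul]
    rw [deriv_bern_sum k (fun m => f (m + 1) - f m)]
    simp
  have hdd : ∀ q ∈ Set.Ioo (0:ℝ) 1, deriv^[2] (fun x => P.eval x) q < 0 := by
    intro q hq
    have e : deriv^[2] (fun x => P.eval x) q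
        = (Polynomial.derivative (Polynomial.derivative P)).eval q := by
      have h1 : deriv (fun x => P.eval x) = fun x => (Polynomial.derivative P).eval x :=
        funext fun x => Polynomial.deriv _
      show deriv (deriv (fun x => P.eval x)) q = _
      rw [h1]
      exact Polynomial.deriv _
    rw [e, hd2]
    simp only [Polynomial.eval_mul, Polynomial.eval_add, Polynomial.eval_natCast,
      Polynomial.eval_one, Polynomial.eval_finset_sum, Polynomial.eval_C]
    apply mul_neg_of_pos_of_neg (by positivity)
    apply mul_neg_of_pos_of_neg (by positivity)
    have hne : (Finset.range (k+1)).Nonempty := Finset.nonempty_range_iff.mpr (by omega)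
    have hlt := Finset.sum_lt_sum_of_nonempty hne
      (f := fun m => (f (m + 2) - f (m + 1) - (f (m + 1) - f m)) * (bernsteinPolynomial ℝ k m).eval q)
      (g := fun _ => (0:ℝ)) ?_
    · simpa using hlt
    · intro m hm
      have hm2 : m + 2 ≤ k + 2 := by have := Finset.mem_range.mp hm; omega
      have hneg := log_choose_concave hm2
      have hb : 0 < (bernsteinPolynomial ℝ k m).eval q := by
        rw [bern_eval]
        have hc : 0 < (k.choose m : ℝ) := by
          exact_mod_cast Nat.choose_pos (by have := Finset.mem_range.mp hm; omega)
        exact mul_pos (mul_pos hc (pow_pos hq.1 m)) (pow_pos (by linarith [hq.2]) _)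
      apply mul_neg_of_neg_of_pos _ hb
      show f (m+2) - f (m+1) - (f (m+1) - f m) < 0
      simp only [hf]
      linarith [hneg]
  rw [hfun]
  exact strictConcaveOn_of_deriv2_neg (convex_Ioo 0 1) (P.continuous_aeval).continuousOn
    (fun x hx => hdd x (by rwa [interior_Ioo] at hx))

lemma Uaux_symm (k : ℕ) (q : ℝ) : Uaux k (1 - q) = Uaux k q := by
  rw [Uaux, Uaux]
  conv_rhs => rw [← Finset.sum_range_reflect]
  apply Finset.sum_congr rfl
  intro j hj
  have hj' : j ≤ k + 2 := by have := Finset.mem_range.mp hj; omega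
  rw [show k + 2 + 1 - 1 - j = k + 2 - j by omega, Nat.choose_symm hj',
    show k + 2 - (k + 2 - j) = j by omega, show (1:ℝ) - (1 - q) = q by ring]
  ring

lemma Uaux_zero (k : ℕ) : Uaux k 0 = 0 := by
  rw [Uaux]
  apply Finset.sum_eq_zero
  intro m _
  match m with
  | 0 => simp
  | (m+1) => simp

lemma Uaux_half_pos (k : ℕ) : 0 < Uaux k (1/2) := by
  rw [Uaux]
  apply Finset.sum_pos'
  · intro m hm
    have h1 : 1 ≤ (k+2).choose m := Nat.choose_pos (by have := Finset.mem_range.mp hm; omega)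
    have h1' : (1:ℝ) ≤ ((k+2).choose m : ℝ) := by exact_mod_cast h1
    have hlog : 0 ≤ Real.log ((k+2).choose m : ℝ) := Real.log_nonneg h1'
    have h0 : (0:ℝ) ≤ ((k+2).choose m : ℝ) := by linarith
    positivity
  · refine ⟨1, Finset.mem_range.mpr (by omega), ?_⟩
    have h1 : (((k+2).choose 1 : ℕ) : ℝ) = (k:ℝ) + 2 := by
      rw [Nat.choose_one_right]; push_cast; ring
    rw [h1]
    have hk2 : (0:ℝ) < (k:ℝ) + 2 := by positivity
    have h2 : (1:ℝ) < (k:ℝ) + 2 := by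
      have : (0:ℝ) ≤ (k:ℝ) := Nat.cast_nonneg k
      linarith
    exact mul_pos (mul_pos (mul_pos hk2 (by norm_num)) (by norm_num)) (Real.log_pos h2)

lemma Uaux_max (k : ℕ) : ∀ q ∈ Set.Icc (0:ℝ) 1, q ≠ 1/2 → Uaux k q < Uaux k (1/2) := by
  intro q hq hne
  rcases eq_or_lt_of_le hq.1 with h0 | h0
  · rw [← h0, Uaux_zero]
    exact Uaux_half_pos k
  rcases eq_or_lt_of_le hq.2 with h1 | h1
  · have := Uaux_symm k 0
    rw [sub_zero, Uaux_zero] at this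
    rw [h1, this]
    exact Uaux_half_pos k
  · have hqI : q ∈ Set.Ioo (0:ℝ) 1 := ⟨h0, h1⟩
    have h1qI : (1 - q) ∈ Set.Ioo (0:ℝ) 1 := ⟨by linarith, by linarith⟩
    have hxy : q ≠ 1 - q := fun h => hne (by linarith)
    have hmain := (Uaux_strictConcave k).2 hqI h1qI hxy one_half_pos one_half_pos (by norm_num)
    rw [show (1/2 : ℝ) • q + (1/2 : ℝ) • (1 - q) = 1/2 by rw [smul_eq_mul, smul_eq_mul]; ring,
      Uaux_symm k q] at hmain
    simp only [smul_eq_mul] at hmain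
    linarith

end BernLogChoose

open BernLogChoose

/-- for `K ≥ 2`, the Bernstein polynomial
`U(q) = ∑_{m=0}^K C(K,m) q^m (1-q)^{K-m} log C(K,m)` is strictly concave on
`(0,1)` and its unique maximizer on `[0,1]` is `q* = 1/2`. -/
theorem bernstein_logchoose_strictConcave_max_at_half (K : ℕ) (hK : 2 ≤ K) :
    StrictConcaveOn ℝ (Set.Ioo (0 : ℝ) 1)
      (fun q : ℝ => ∑ m ∈ Finset.range (K + 1),
        (K.choose m : ℝ) * q ^ m * (1 - q) ^ (K - m) * Real.log (K.choose m)) ∧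
    ∀ q ∈ Set.Icc (0 : ℝ) 1, q ≠ 1 / 2 →
      (∑ m ∈ Finset.range (K + 1),
        (K.choose m : ℝ) * q ^ m * (1 - q) ^ (K - m) * Real.log (K.choose m)) <
      (∑ m ∈ Finset.range (K + 1),
        (K.choose m : ℝ) * (1 / 2 : ℝ) ^ m * (1 - 1 / 2 : ℝ) ^ (K - m) * Real.log (K.choose m)) := by
  obtain ⟨k, rfl⟩ : ∃ k, K = k + 2 := ⟨K - 2, by omega⟩
  constructor
  · exact Uaux_strictConcave k
  · intro q hq hne
    show Uaux k q < Uaux k (1/2)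
    exact Uaux_max k q hq hne
end

section
/- Let I_1,…,I_K be independent Bernoulli random variables with parameters q_1,…,q_K ∈ (0,1), S = (I_1,…,I_K), τ = Σ_i I_i. Fix m with 1 ≤ m ≤ K−1. Then H(S | τ = m) = log C(K,m) holds if and only if q_1 = q_2 = … = q_K. -/
open Real Finset

/-- Probability that the random variable `X` takes the value `a`, for a finite
probability space with mass function `P`. -/
noncomputable def pr {Ω A : Type*} [Fintype Ω] [DecidableEq A]
    (P : Ω → ℝ) (X : Ω → A) (a : A) : ℝ :=
  ∑ ω ∈ Finset.univ.filter (fun ω => X ω = a), P ω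

/-- Conditional Shannon entropy `H(X | Y = b)` (natural logarithm), with the
convention `0 log 0 = 0`. -/
noncomputable def condEntAt {Ω A B : Type*} [Fintype Ω] [Fintype A]
    [DecidableEq A] [DecidableEq B] (P : Ω → ℝ) (X : Ω → A) (Y : Ω → B) (b : B) : ℝ :=
  -∑ a : A,
    (pr P (fun ω => (X ω, Y ω)) (a, b) / pr P Y b) *
      Real.log (pr P (fun ω => (X ω, Y ω)) (a, b) / pr P Y b)

/-- Number of ones of a boolean vector. -/
def countOnes {K : ℕ} (ω : Fin K → Bool) : ℕ :=
  (Finset.univ.filter (fun i => ω i = true)).card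

lemma entropy_eq_log_card_iff {α : Type*} [DecidableEq α] (F : Finset α) (P : α → ℝ)
    (hP : ∀ a ∈ F, 0 < P a) (hne : F.Nonempty) :
    -∑ a ∈ F, (P a / ∑ b ∈ F, P b) * Real.log (P a / ∑ b ∈ F, P b) = Real.log F.card ↔
      ∀ a ∈ F, ∀ b ∈ F, P a = P b := by
  set Z := ∑ b ∈ F, P b with hZdef
  have hZ : 0 < Z := Finset.sum_pos hP hne
  have hw : ∀ a ∈ F, 0 < P a / Z := fun a ha => div_pos (hP a ha) hZ
  have hw1 : ∑ a ∈ F, P a / Z = 1 := by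
    rw [← Finset.sum_div, ← hZdef, div_self hZ.ne']
  have hcard : (0:ℝ) < F.card := by exact_mod_cast Finset.card_pos.2 hne
  have hsum_inv : ∑ a ∈ F, (P a / Z) * (P a / Z)⁻¹ = (F.card : ℝ) := by
    rw [Finset.sum_congr rfl (fun a ha => mul_inv_cancel₀ (hw a ha).ne')]
    simp
  have hH : -∑ a ∈ F, (P a / Z) * Real.log (P a / Z)
      = ∑ a ∈ F, (P a / Z) * Real.log (P a / Z)⁻¹ := by
    rw [← Finset.sum_neg_distrib]
    refine Finset.sum_congr rfl fun a ha => ?_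
    rw [Real.log_inv]; ring
  constructor
  · intro h
    have key : Real.log (∑ a ∈ F, (P a / Z) • ((P a / Z)⁻¹ : ℝ))
        ≤ ∑ a ∈ F, (P a / Z) • Real.log (P a / Z)⁻¹ := by
      simp only [smul_eq_mul]
      rw [hsum_inv, ← hH, h]
    have hconst := strictConcaveOn_log_Ioi.eq_of_map_sum_eq hw hw1
      (fun a ha => Set.mem_Ioi.2 (inv_pos.2 (hw a ha))) key
    intro a ha b hb
    have h2 : (P a / Z)⁻¹ = (P b / Z)⁻¹ := hconst ha hb
    have h3 : P a / Z = P b / Z := inv_injective h2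
    field_simp [hZ.ne'] at h3
    exact h3
  · intro h
    obtain ⟨a₀, ha₀⟩ := hne
    have hc : ∀ a ∈ F, P a = P a₀ := fun a ha => h a ha a₀ ha₀
    have hZc : Z = F.card * P a₀ := by
      rw [hZdef, Finset.sum_congr rfl hc, Finset.sum_const, nsmul_eq_mul]
    have hw' : ∀ a ∈ F, P a / Z = (F.card : ℝ)⁻¹ := by
      intro a ha
      rw [hc a ha, hZc]
      field_simp [(hP a₀ ha₀).ne']
    rw [Finset.sum_congr rfl (fun a ha => by rw [hw' a ha]), Finset.sum_const, nsmul_eq_mul,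
      Real.log_inv]
    field_simp

/-- for independent Bernoulli bits with parameters
`q_1, …, q_K ∈ (0,1)`, `S = (I_1,…,I_K)`, `τ = ∑ I_i`, and `1 ≤ m ≤ K-1`,
`H(S | τ = m) = log C(K,m)` holds iff `q_1 = q_2 = … = q_K`. -/
theorem bernoulli_condEnt_eq_log_choose_iff_equal_params
    (K : ℕ) (q : Fin K → ℝ) (hq : ∀ i, q i ∈ Set.Ioo (0 : ℝ) 1)
    (m : ℕ) (hm1 : 1 ≤ m) (hm2 : m ≤ K - 1) :
    condEntAt (fun ω : Fin K → Bool => ∏ i, (if ω i then q i else 1 - q i))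
        (fun ω => ω) countOnes m = Real.log (K.choose m) ↔
      ∀ i j : Fin K, q i = q j := by
  classical
  have hK : 2 ≤ K := by omega
  have hmK : m ≤ K := by omega
  set P : (Fin K → Bool) → ℝ := fun ω => ∏ i, (if ω i then q i else 1 - q i) with hPdef
  set F : Finset (Fin K → Bool) := Finset.univ.filter (fun a => countOnes a = m) with hFdef
  have hP : ∀ a, 0 < P a := by
    intro a
    refine Finset.prod_pos fun i _ => ?_
    split
    · exact (hq i).1
    · linarith [(hq i).2]
  -- cardinality of the fiber
  have hcardF : F.card = K.choose m := by
    have h1 : F.card = (Finset.powersetCard m (univ : Finset (Fin K))).card := by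
      refine Finset.card_bij (fun a _ => univ.filter (fun i => a i = true)) ?_ ?_ ?_
      · intro a ha
        rw [Finset.mem_powersetCard]
        exact ⟨Finset.subset_univ _, (Finset.mem_filter.1 ha).2⟩
      · intro a ha b hb h
        funext i
        have := Finset.ext_iff.1 h i
        simp only [Finset.mem_filter, Finset.mem_univ, true_and] at this
        by_cases hai : a i = true <;> by_cases hbi : b i = true <;> simp_all
      · intro s hs
        rw [Finset.mem_powersetCard] at hs
        refine ⟨fun i => decide (i ∈ s), ?_, ?_⟩
        · rw [hFdef, Finset.mem_filter]
          refine ⟨Finset.mem_univ _, ?_⟩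
          unfold countOnes
          rw [← hs.2]
          congr 1
          ext i; simp
        · ext i; simp
    rw [h1, Finset.card_powersetCard, Finset.card_univ, Fintype.card_fin]
  have hFne : F.Nonempty := by
    rw [← Finset.card_pos, hcardF]
    exact Nat.choose_pos hmK
  -- rewrite condEntAt
  have hpr1 : ∀ a : Fin K → Bool,
      pr P (fun ω => (ω, countOnes ω)) (a, m) = if countOnes a = m then P a else 0 := by
    intro a
    unfold pr
    by_cases h : countOnes a = m
    · rw [if_pos h]
      have hfil : (univ.filter (fun ω : Fin K → Bool => (ω, countOnes ω) = (a, m))) = {a} := by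
        ext ω
        simp only [Finset.mem_filter, Finset.mem_univ, true_and, Prod.mk.injEq,
          Finset.mem_singleton]
        constructor
        · rintro ⟨h1, _⟩; exact h1
        · rintro rfl; exact ⟨rfl, h⟩
      rw [hfil, Finset.sum_singleton]
    · rw [if_neg h]
      have hfil : (univ.filter (fun ω : Fin K → Bool => (ω, countOnes ω) = (a, m))) = ∅ := by
        ext ω
        simp only [Finset.mem_filter, Finset.mem_univ, true_and, Prod.mk.injEq,
          Finset.notMem_empty, iff_false, not_and]
        rintro rfl
        exact h
      rw [hfil, Finset.sum_empty]
  have hpr2 : pr P countOnes m = ∑ a ∈ F, P a := rfl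
  set Z := ∑ a ∈ F, P a with hZdef
  have hEnt : condEntAt P (fun ω => ω) countOnes m
      = -∑ a ∈ F, (P a / Z) * Real.log (P a / Z) := by
    unfold condEntAt
    rw [hpr2]
    congr 1
    rw [hFdef, Finset.sum_filter]
    refine Finset.sum_congr rfl fun a _ => ?_
    rw [hpr1]
    by_cases h : countOnes a = m
    · rw [if_pos h, if_pos h]
    · rw [if_neg h, if_neg h]
      simp
  -- equivalence between P constant on F and q constant
  have hPF_iff : (∀ a ∈ F, ∀ b ∈ F, P a = P b) ↔ (∀ i j : Fin K, q i = q j) := by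
    constructor
    · intro h i j
      by_cases hij : i = j
      · rw [hij]
      · -- build a set t of size m-1 avoiding i and j
        have hcard2 : m - 1 ≤ ((univ.erase i).erase j).card := by
          rw [Finset.card_erase_of_mem (Finset.mem_erase.2 ⟨Ne.symm hij, Finset.mem_univ j⟩),
            Finset.card_erase_of_mem (Finset.mem_univ i), Finset.card_univ, Fintype.card_fin]
          omega
        obtain ⟨t, hts, htc⟩ := Finset.exists_subset_card_eq hcard2
        have hit : i ∉ t := fun hmem => (Finset.mem_erase.1 (Finset.mem_erase.1 (hts hmem)).2).1 rfl
        have hjt : j ∉ t := fun hmem => (Finset.mem_erase.1 (hts hmem)).1 rfl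
        set a : Fin K → Bool := fun k => decide (k ∈ insert i t) with hadef
        set b : Fin K → Bool := fun k => decide (k ∈ insert j t) with hbdef
        have hamem : a ∈ F := by
          rw [hFdef, Finset.mem_filter]
          refine ⟨Finset.mem_univ _, ?_⟩
          unfold countOnes
          have : (univ.filter (fun k => a k = true)) = insert i t := by ext k; simp [hadef]
          rw [this, Finset.card_insert_of_notMem hit, htc]
          omega
        have hbmem : b ∈ F := by
          rw [hFdef, Finset.mem_filter]
          refine ⟨Finset.mem_univ _, ?_⟩
          unfold countOnes
          have : (univ.filter (fun k => b k = true)) = insert j t := by ext k; simp [hbdef]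
          rw [this, Finset.card_insert_of_notMem hjt, htc]
          omega
        have hPab := h a hamem b hbmem
        -- split products at i and j
        have hsplit : ∀ c : Fin K → Bool,
            P c = (if c i then q i else 1 - q i) * ((if c j then q j else 1 - q j) *
              ∏ k ∈ (univ.erase i).erase j, (if c k then q k else 1 - q k)) := by
          intro c
          rw [hPdef]
          dsimp only
          rw [← Finset.mul_prod_erase univ _ (Finset.mem_univ i),
            ← Finset.mul_prod_erase (univ.erase i) _
              (Finset.mem_erase.2 ⟨Ne.symm hij, Finset.mem_univ j⟩)]
        have hRpos : 0 < ∏ k ∈ (univ.erase i).erase j, (if a k then q k else 1 - q k) := by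
          refine Finset.prod_pos fun k _ => ?_
          split
          · exact (hq k).1
          · linarith [(hq k).2]
        have htail : ∏ k ∈ (univ.erase i).erase j, (if a k then q k else 1 - q k)
            = ∏ k ∈ (univ.erase i).erase j, (if b k then q k else 1 - q k) := by
          refine Finset.prod_congr rfl fun k hk => ?_
          have hki : k ≠ i := (Finset.mem_erase.1 (Finset.mem_erase.1 hk).2).1
          have hkj : k ≠ j := (Finset.mem_erase.1 hk).1
          have : a k = b k := by simp [hadef, hbdef, hki, hkj]
          rw [this]
        have hai : a i = true := by simp [hadef]
        have haj : a j = false := by simp [hadef, Ne.symm hij, hjt]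
        have hbi : b i = false := by simp [hbdef, hij, hit]
        have hbj : b j = true := by simp [hbdef]
        rw [hsplit a, hsplit b, hai, haj, hbi, hbj, ← htail] at hPab
        norm_num at hPab
        set R := ∏ k ∈ (univ.erase i).erase j, (if a k then q k else 1 - q k)
        have hkey : q i * (1 - q j) = (1 - q i) * q j := by
          have h2 : (q i * (1 - q j)) * R = ((1 - q i) * q j) * R := by
            linear_combination hPab
          exact mul_right_cancel₀ hRpos.ne' h2
        nlinarith [hkey]
    · intro h a ha b hb
      set c := q ⟨0, by omega⟩ with hcdef
      have hqc : ∀ i, q i = c := fun i => h i ⟨0, by omega⟩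
      have hval : ∀ x ∈ F, P x = c ^ m * (1 - c) ^ (K - m) := by
        intro x hx
        have hxm : countOnes x = m := (Finset.mem_filter.1 hx).2
        rw [hPdef]
        calc (∏ i, if x i then q i else 1 - q i)
            = ∏ i, (if x i = true then c else 1 - c) := by
              refine Finset.prod_congr rfl fun i _ => ?_
              rw [hqc i]
          _ = c ^ m * (1 - c) ^ (K - m) := by
              rw [Finset.prod_ite, Finset.prod_const, Finset.prod_const]
              have h1 : (univ.filter (fun i => x i = true)).card = m := hxm
              have h2 : (univ.filter (fun i => ¬(x i = true))).card = K - m := by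
                have := Finset.card_filter_add_card_filter_not
                  (s := (univ : Finset (Fin K))) (p := fun i => x i = true)
                rw [Finset.card_univ, Fintype.card_fin] at this
                omega
              rw [h1, h2]
      rw [hval a ha, hval b hb]
  rw [hEnt, ← hcardF]
  rw [entropy_eq_log_card_iff F P (fun a _ => hP a) hFne]
  exact hPF_iff
end
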